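/- Let S₀ = {n-d, n-d+1, ..., n} and let T <₂ T' be triangulations of the cyclic polytope C(n,d) with T below T' in the second higher Stasheff–Tamari order. If d is even and S₀ ∈ T, then S₀ ∈ T'; if d is odd and S₀ ∈ T', then S₀ ∈ T. -/

import Mathlib

open Finset

/-- The `i`-th point on the moment curve in `ℝ^d`: `(i, i², …, i^d)`. -/
def mompt (d i : ℕ) : Fin d → ℝ := fun k => (i : ℝ) ^ (k.1 + 1)

/-- The convex hull of the moment-curve points with labels in `S`; for `S = [n]` this is
the cyclic polytope `C(n,d)`, and for small `S` it is the simplex spanned by `S`. -/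
def simplexHull (d : ℕ) (S : Finset ℕ) : Set (Fin d → ℝ) :=
  convexHull ℝ (mompt d '' ↑S)

/-- Standard dot product on `Fin d → ℝ`. -/
def dotp {d : ℕ} (w x : Fin d → ℝ) : ℝ := ∑ k, w k * x k

/-- Two label sets span *admissible* simplices in dimension `d`: their geometric
intersection is a common (possibly empty) face of each, i.e. the convex hull of a common
subset of their vertices. -/
def Admissible (d : ℕ) (S₁ S₂ : Finset ℕ) : Prop :=
  ∃ R : Finset ℕ, R ⊆ S₁ ∧ R ⊆ S₂ ∧
    simplexHull d S₁ ∩ simplexHull d S₂ = simplexHull d R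

/-- A triangulation of the cyclic polytope with vertex set `V ⊆ ℕ` in dimension `d`,
identified with its set of maximal (`d`-dimensional) simplices. -/
structure TriangulationOn (d : ℕ) (V : Finset ℕ) where
  simps : Finset (Finset ℕ)
  subset_vertices : ∀ S ∈ simps, S ⊆ V
  card_eq : ∀ S ∈ simps, S.card = d + 1
  covers : (⋃ S ∈ simps, simplexHull d S) = simplexHull d V
  pairwise_admissible : ∀ S ∈ simps, ∀ S' ∈ simps, Admissible d S S'

/-- Triangulations of `C(n,d)`, on the vertex labels `[n] = {1,…,n}`. -/
abbrev Triangulation (n d : ℕ) := TriangulationOn d (Finset.Icc 1 n)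

/-- Deleting the last coordinate: the canonical projection `C(n,d+1) → C(n,d)`. -/
def projLast {d : ℕ} (y : Fin (d + 1) → ℝ) : Fin d → ℝ := fun k => y k.castSucc

/-- The last coordinate of a point of `ℝ^{d+1}`. -/
def lastc {d : ℕ} (y : Fin (d + 1) → ℝ) : ℝ := y (Fin.last d)

/-- The linear section over the simplex `S` lies weakly below the one over `S'`:
whenever points of the lifted simplices in `C(n,d+1)` project to the same point of
`C(n,d)`, the last coordinates compare. -/
def WeaklyLower (d : ℕ) (S S' : Finset ℕ) : Prop :=
  ∀ y ∈ simplexHull (d + 1) S, ∀ z ∈ simplexHull (d + 1) S',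
    projLast y = projLast z → lastc y ≤ lastc z

/-- The second higher Stasheff–Tamari order: the characteristic section of `T` lies
pointwise weakly below that of `T'`. -/
def le₂ {d : ℕ} {V : Finset ℕ} (T T' : TriangulationOn d V) : Prop :=
  ∀ S ∈ T.simps, ∀ S' ∈ T'.simps, WeaklyLower d S S'

/-- The simplex `σ` is submerged by the triangulation `T`: its linear section lies
weakly below the characteristic section of `T`. -/
def Submerged {d : ℕ} {V : Finset ℕ} (σ : Finset ℕ) (T : TriangulationOn d V) : Prop :=
  ∀ S ∈ T.simps, WeaklyLower d σ S

/-- `F` spans a *lower facet* of the cyclic polytope on vertex set `V` in dimension `d`: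
a facet visible from points with very negative last coordinate (outer normal with
negative last coordinate). -/
def IsLowerFacet (d : ℕ) (V F : Finset ℕ) : Prop :=
  F ⊆ V ∧ F.card = d ∧
  ∃ (hd : 0 < d) (w : Fin d → ℝ) (c : ℝ),
    w ⟨d - 1, Nat.sub_lt hd Nat.one_pos⟩ < 0 ∧
    (∀ i ∈ F, dotp w (mompt d i) = c) ∧
    (∀ i ∈ V \ F, dotp w (mompt d i) < c)

/-- `F` spans an *upper facet* of the cyclic polytope on vertex set `V` in dimension `d`. -/
def IsUpperFacet (d : ℕ) (V F : Finset ℕ) : Prop :=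
  F ⊆ V ∧ F.card = d ∧
  ∃ (hd : 0 < d) (w : Fin d → ℝ) (c : ℝ),
    0 < w ⟨d - 1, Nat.sub_lt hd Nat.one_pos⟩ ∧
    (∀ i ∈ F, dotp w (mompt d i) = c) ∧
    (∀ i ∈ V \ F, dotp w (mompt d i) < c)

/-- The lower facets of the `(k-1)`-simplex with vertex set `S̃` (gap criterion: erase a
vertex leaving an even gap, i.e. an even number of larger labels in `S̃`). -/
def lowerFacets (St : Finset ℕ) : Finset (Finset ℕ) :=
  (St.filter fun i => Even ((St.filter fun j => i < j).card)).image St.erase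

/-- The upper facets of the simplex with vertex set `S̃` (odd-gap criterion). -/
def upperFacets (St : Finset ℕ) : Finset (Finset ℕ) :=
  (St.filter fun i => Odd ((St.filter fun j => i < j).card)).image St.erase

/-- An increasing bistellar flip on sets of maximal simplices: replace the lower facets
of a `(d+1)`-simplex `S̃` of `C(n,d+1)` (all present) by its upper facets. -/
def IsFlip (n d : ℕ) (T T' : Finset (Finset ℕ)) : Prop :=
  ∃ St : Finset ℕ, St ⊆ Finset.Icc 1 n ∧ St.card = d + 2 ∧
    lowerFacets St ⊆ T ∧ T' = (T \ lowerFacets St) ∪ upperFacets St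

/-- The first higher Stasheff–Tamari order: transitive closure of increasing flips. -/
def le₁ {n d : ℕ} (T T' : Triangulation n d) : Prop :=
  Relation.ReflTransGen (IsFlip n d) T.simps T'.simps

/-- The minimal triangulation `0̂` of the cyclic polytope on vertex set `V` in dimension
`d`: the `(d+1)`-subsets of `V` all of whose gaps in `V` are even (the lower facets of
the cyclic polytope on `V` in dimension `d+1`). -/
def botOn (d : ℕ) (V : Finset ℕ) : Finset (Finset ℕ) :=
  (V.powersetCard (d + 1)).filter fun F =>
    ∀ i ∈ V \ F, Even ((F.filter fun j => i < j).card)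

/-- The maximal triangulation `1̂` (odd gaps / upper facets). -/
def topOn (d : ℕ) (V : Finset ℕ) : Finset (Finset ℕ) :=
  (V.powersetCard (d + 1)).filter fun F =>
    ∀ i ∈ V \ F, Odd ((F.filter fun j => i < j).card)

/-- The maximal simplices of the contraction `f(T) = del_T(n) ∪ del_{lk_T(n)}(n-1) ∗ {n-1}`
of a triangulation of `C(n,d)` to one of `C(n-1,d)`. -/
def fSimps (n : ℕ) (T : Finset (Finset ℕ)) : Finset (Finset ℕ) :=
  T.filter (fun S => n ∉ S) ∪
    ((T.filter fun S => n ∈ S ∧ n - 1 ∉ S).image fun S => insert (n - 1) (S.erase n))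

/-- The maximal simplices of `i(T) = T ∪ st_{0̂_{n,d}}(n)`. -/
def iSimps (n d : ℕ) (T : Finset (Finset ℕ)) : Finset (Finset ℕ) :=
  T ∪ (botOn d (Finset.Icc 1 n)).filter fun F => n ∈ F


/-! ### Auxiliary lemmas -/

lemma mompt_injOn (d : ℕ) : Set.InjOn (mompt (d+1)) s := by
  intro a _ b _ h
  have := congrFun h ⟨0, Nat.succ_pos d⟩
  simpa [mompt] using this

lemma projLast_mompt (d i : ℕ) : projLast (mompt (d+1) i) = mompt d i := rfl

noncomputable def projLastL (d : ℕ) : (Fin (d+1) → ℝ) →ₗ[ℝ] (Fin d → ℝ) :=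
  LinearMap.funLeft ℝ ℝ Fin.castSucc

lemma projLastL_apply (d : ℕ) (y : Fin (d+1) → ℝ) : projLastL d y = projLast y := rfl

/-- extract label-indexed weights from membership in a lifted simplex hull -/
lemma exists_weights {d : ℕ} {S : Finset ℕ} {z : Fin (d+1) → ℝ}
    (hz : z ∈ simplexHull (d+1) S) :
    ∃ μ : ℕ → ℝ, (∀ i ∈ S, 0 ≤ μ i) ∧ (∑ i ∈ S, μ i) = 1 ∧
      (∑ i ∈ S, μ i • mompt (d+1) i) = z := by
  rw [simplexHull, ← Finset.coe_image, Finset.mem_convexHull'] at hz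
  obtain ⟨w, hw0, hw1, hwz⟩ := hz
  refine ⟨fun i => w (mompt (d+1) i), ?_, ?_, ?_⟩
  · intro i hi; exact hw0 _ (Finset.mem_image_of_mem _ hi)
  · rw [← hw1, Finset.sum_image (fun a ha b hb h => mompt_injOn d ha hb h)]
  · rw [← hwz, Finset.sum_image (fun a ha b hb h => mompt_injOn d ha hb h)]

lemma sum_mem_simplexHull {d : ℕ} {S : Finset ℕ} {μ : ℕ → ℝ}
    (h0 : ∀ i ∈ S, 0 ≤ μ i) (h1 : (∑ i ∈ S, μ i) = 1) :
    (∑ i ∈ S, μ i • mompt d i) ∈ simplexHull d S := by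
  rw [← Finset.centerMass_eq_of_sum_1 _ _ h1]
  exact Finset.centerMass_mem_convexHull _ h0 (h1 ▸ zero_lt_one)
    (fun i hi => Set.mem_image_of_mem _ hi)

lemma dotp_sum {d : ℕ} (w : Fin d → ℝ) (S : Finset ℕ) (μ : ℕ → ℝ) (f : ℕ → Fin d → ℝ) :
    dotp w (∑ i ∈ S, μ i • f i) = ∑ i ∈ S, μ i * dotp w (f i) := by
  simp only [dotp, Finset.sum_apply, Pi.smul_apply, smul_eq_mul, Finset.mul_sum]
  rw [Finset.sum_comm]
  apply Finset.sum_congr rfl; intros; apply Finset.sum_congr rfl; intros; ring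

lemma simplexHull_mono {d : ℕ} {S S' : Finset ℕ} (h : S ⊆ S') :
    simplexHull d S ⊆ simplexHull d S' :=
  convexHull_mono (Set.image_mono h)

open Polynomial in
lemma facet (n d : ℕ) (hn : d + 1 < n) :
    ∃ (w : Fin (d+1) → ℝ) (c : ℝ),
      w (Fin.last d) = (-1 : ℝ)^d ∧
      (∀ i ∈ Finset.Icc (n-d) n, dotp w (mompt (d+1) i) = c) ∧
      (∀ i ∈ Finset.Icc 1 n \ Finset.Icc (n-d) n, dotp w (mompt (d+1) i) < c) := by
  set S₀ := Finset.Icc (n-d) n with hS₀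
  have hcard : S₀.card = d + 1 := by rw [hS₀, Nat.card_Icc]; omega
  set P : ℝ[X] := ∏ j ∈ S₀, (X - C (j:ℝ)) with hP
  have hmonic : P.Monic := monic_prod_of_monic _ _ (fun j _ => monic_X_sub_C _)
  have hdeg : P.natDegree = d + 1 := by
    rw [hP, natDegree_prod _ _ (fun j _ => X_sub_C_ne_zero _)]
    simp only [natDegree_X_sub_C]
    rw [Finset.sum_const, hcard, smul_eq_mul, mul_one]
  set s : ℝ := (-1 : ℝ)^d with hs
  refine ⟨fun k => s * P.coeff (k.1 + 1), -(s * P.coeff 0), ?_, ?_, ?_⟩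
  · have : P.coeff (d+1) = 1 := by
      have := hmonic.leadingCoeff
      rwa [leadingCoeff, hdeg] at this
    simp [Fin.last, this]
  all_goals {
    have key : ∀ i : ℕ, dotp (fun k : Fin (d+1) => s * P.coeff (k.1+1)) (mompt (d+1) i)
        = s * P.eval (i:ℝ) - s * P.coeff 0 := by
      intro i
      have hev : P.eval (i:ℝ) = ∑ k ∈ Finset.range (d+2), P.coeff k * (i:ℝ)^k :=
        eval_eq_sum_range' (by omega) _
      have hsplit : ∑ k ∈ Finset.range (d+2), P.coeff k * (i:ℝ)^k
          = (∑ k ∈ Finset.range (d+1), P.coeff (k+1) * (i:ℝ)^(k+1)) + P.coeff 0 * (i:ℝ)^0 :=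
        Finset.sum_range_succ' _ _
      simp only [dotp, mompt]
      rw [Fin.sum_univ_eq_sum_range (fun k => s * P.coeff (k+1) * (i:ℝ)^(k+1)) (d+1)]
      rw [hev, hsplit, mul_add, Finset.mul_sum, pow_zero, mul_one, add_sub_cancel_right]
      exact Finset.sum_congr rfl fun k _ => by ring
    first
    | · intro i hi
        rw [key]
        have : P.eval (i:ℝ) = 0 := by
          rw [hP, eval_prod]
          exact Finset.prod_eq_zero hi (by simp)
        rw [this]; ring
    | · intro i hi
        rw [key]
        obtain ⟨hi1, hi2⟩ := Finset.mem_sdiff.mp hi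
        rw [Finset.mem_Icc] at hi1
        have hilt : i < n - d := by
          rw [hS₀, Finset.mem_Icc] at hi2; omega
        have hevP : P.eval (i:ℝ) = (-1:ℝ)^(d+1) * ∏ j ∈ S₀, ((j:ℝ) - (i:ℝ)) := by
          rw [hP, eval_prod, ← hcard]
          rw [← Finset.prod_const (-1:ℝ), ← Finset.prod_mul_distrib]
          apply Finset.prod_congr rfl
          intro j _
          simp only [eval_sub, eval_X, eval_C]
          ring
        have hpos : 0 < ∏ j ∈ S₀, ((j:ℝ) - (i:ℝ)) := by
          apply Finset.prod_pos
          intro j hj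
          rw [hS₀, Finset.mem_Icc] at hj
          have : i < j := by omega
          have : (i:ℝ) < (j:ℝ) := by exact_mod_cast this
          linarith
        have : s * P.eval (i:ℝ) < 0 := by
          rw [hevP, hs]
          have : (-1:ℝ)^d * ((-1:ℝ)^(d+1) * ∏ j ∈ S₀, ((j:ℝ) - (i:ℝ)))
              = -(∏ j ∈ S₀, ((j:ℝ) - (i:ℝ))) := by
            rw [← mul_assoc, ← pow_add]
            have : (-1:ℝ)^(d + (d+1)) = -1 := Odd.neg_one_pow ⟨d, by ring⟩
            rw [this]; ring
          rw [this]; linarith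
        linarith }

lemma core (n d : ℕ) (hn : d + 1 < n) (T'' : Triangulation n d)
    (w : Fin (d+1) → ℝ) (c : ℝ)
    (heq : ∀ i ∈ Finset.Icc (n-d) n, dotp w (mompt (d+1) i) = c)
    (hlt : ∀ i ∈ Finset.Icc 1 n \ Finset.Icc (n-d) n, dotp w (mompt (d+1) i) < c)
    (hcmp : ∀ S' ∈ T''.simps, ∀ z ∈ simplexHull (d+1) S',
      ∀ y ∈ simplexHull (d+1) (Finset.Icc (n-d) n),
      projLast z = projLast y → 0 ≤ w (Fin.last d) * (lastc z - lastc y)) :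
    Finset.Icc (n-d) n ∈ T''.simps := by
  set S₀ := Finset.Icc (n-d) n with hS₀
  have hcard : S₀.card = d + 1 := by rw [hS₀, Nat.card_Icc]; omega
  have hsub : S₀ ⊆ Finset.Icc 1 n := by
    intro i hi; rw [hS₀, Finset.mem_Icc] at hi; rw [Finset.mem_Icc]; omega
  set μ₀ : ℕ → ℝ := fun _ => ((d:ℝ) + 1)⁻¹ with hμ₀
  have hμ₀pos : ∀ i ∈ S₀, 0 ≤ μ₀ i := by
    intro i _; rw [hμ₀]; positivity
  have hμ₀sum : (∑ i ∈ S₀, μ₀ i) = 1 := by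
    rw [Finset.sum_const, hcard, nsmul_eq_mul]
    push_cast
    field_simp
  set y : Fin (d+1) → ℝ := ∑ i ∈ S₀, μ₀ i • mompt (d+1) i with hy
  set x : Fin d → ℝ := ∑ i ∈ S₀, μ₀ i • mompt d i with hx
  have hyS₀ : y ∈ simplexHull (d+1) S₀ := sum_mem_simplexHull hμ₀pos hμ₀sum
  have hprojy : projLast y = x := by
    rw [hy, hx]
    funext k
    simp [projLast, Finset.sum_apply, mompt, Fin.coe_castSucc]
  -- x lies in the cyclic polytope, hence in some simplex of T''
  have hxV : x ∈ simplexHull d (Finset.Icc 1 n) :=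
    simplexHull_mono hsub (sum_mem_simplexHull hμ₀pos hμ₀sum)
  rw [← T''.covers] at hxV
  obtain ⟨S', hS'mem, hxS'⟩ := Set.mem_iUnion₂.mp hxV
  have hS'sub : S' ⊆ Finset.Icc 1 n := T''.subset_vertices _ hS'mem
  -- lift x to a point z of the lifted simplex over S'
  have hsurj : simplexHull d S' = projLast '' (simplexHull (d+1) S') := by
    have h1 : (projLastL d) '' (convexHull ℝ (mompt (d+1) '' ↑S'))
        = convexHull ℝ ((projLastL d) '' (mompt (d+1) '' ↑S')) :=
      (projLastL d).image_convexHull _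
    rw [simplexHull, simplexHull]
    have h2 : (projLastL d) '' (mompt (d+1) '' ↑S') = mompt d '' ↑S' := by
      rw [← Set.image_comp]; rfl
    rw [h2] at h1
    exact h1.symm
  rw [hsurj] at hxS'
  obtain ⟨z, hzS', hprojz⟩ := hxS'
  obtain ⟨μ, hμ0, hμ1, hμz⟩ := exists_weights hzS'
  -- dot products
  have hdotpy : dotp w y = c := by
    rw [hy, dotp_sum]
    rw [Finset.sum_congr rfl (fun i hi => by rw [heq i hi])]
    rw [← Finset.sum_mul, hμ₀sum, one_mul]
  have hdotle : ∀ i ∈ S', dotp w (mompt (d+1) i) ≤ c := by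
    intro i hi
    by_cases h : i ∈ S₀
    · exact le_of_eq (heq i h)
    · exact le_of_lt (hlt i (Finset.mem_sdiff.mpr ⟨hS'sub hi, h⟩))
  have hdotz_le : dotp w z ≤ c := by
    rw [← hμz, dotp_sum]
    calc ∑ i ∈ S', μ i * dotp w (mompt (d+1) i) ≤ ∑ i ∈ S', μ i * c :=
          Finset.sum_le_sum fun i hi =>
            mul_le_mul_of_nonneg_left (hdotle i hi) (hμ0 i hi)
      _ = c := by rw [← Finset.sum_mul, hμ1, one_mul]
  have hdotz_ge : c ≤ dotp w z := by
    have h0 := hcmp S' hS'mem z hzS' y hyS₀ (by rw [hprojz, hprojy])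
    have hdiff : dotp w z - dotp w y = w (Fin.last d) * (lastc z - lastc y) := by
      have hsplit : ∀ v : Fin (d+1) → ℝ,
          dotp w v = (∑ k : Fin d, w k.castSucc * v k.castSucc)
            + w (Fin.last d) * v (Fin.last d) := by
        intro v; rw [dotp, Fin.sum_univ_castSucc]
      rw [hsplit z, hsplit y]
      have hagree : ∀ k : Fin d, z k.castSucc = y k.castSucc := by
        intro k
        have h1 := congrFun hprojz k
        have h2 := congrFun hprojy k
        simp only [projLast] at h1 h2
        rw [h1, h2]
      rw [Finset.sum_congr rfl (fun k _ => by rw [hagree k])]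
      simp only [lastc]; ring
    linarith [h0, hdiff, hdotpy]
  have hdotz : dotp w z = c := le_antisymm hdotz_le hdotz_ge
  -- equality case: weights outside S₀ vanish
  have hzero : ∀ i ∈ S', i ∉ S₀ → μ i = 0 := by
    have hsum0 : (∑ i ∈ S', μ i * (dotp w (mompt (d+1) i) - c)) = 0 := by
      have he : (∑ i ∈ S', μ i * (dotp w (mompt (d+1) i) - c))
          = (∑ i ∈ S', μ i * dotp w (mompt (d+1) i)) - (∑ i ∈ S', μ i) * c := by
        rw [Finset.sum_mul, ← Finset.sum_sub_distrib]
        exact Finset.sum_congr rfl fun i _ => by ring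
      rw [he, hμ1, one_mul, ← dotp_sum, hμz, hdotz, sub_self]
    have hterm : ∀ i ∈ S', μ i * (dotp w (mompt (d+1) i) - c) ≤ 0 := fun i hi =>
      mul_nonpos_of_nonneg_of_nonpos (hμ0 i hi) (by linarith [hdotle i hi])
    intro i hi hiS₀
    have h0 := (Finset.sum_eq_zero_iff_of_nonpos hterm).mp hsum0 i hi
    have hstrict : dotp w (mompt (d+1) i) - c < 0 := by
      have := hlt i (Finset.mem_sdiff.mpr ⟨hS'sub hi, hiS₀⟩); linarith
    rcases mul_eq_zero.mp h0 with h | h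
    · exact h
    · exact absurd h (ne_of_lt hstrict)
  -- sums over S' restrict to S' ∩ S₀
  have hsplitS' : ∀ (M : Type) (_ : AddCommMonoid M), True := fun _ _ => trivial
  have hrestrict : ∀ (f : ℕ → Fin d → ℝ), True := fun _ => trivial
  have hxrep : (∑ i ∈ S₀, (if i ∈ S' then μ i else 0) • mompt d i) = x := by
    have hstep : (∑ i ∈ S₀, (if i ∈ S' then μ i else 0) • mompt d i)
        = ∑ i ∈ S₀, (if i ∈ S' then μ i • mompt d i else 0) :=
      Finset.sum_congr rfl fun i _ => by split_ifs with h <;> simp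
    rw [hstep, Finset.sum_ite_mem]
    rw [← hprojz, ← hμz]
    have hpr : projLast (∑ i ∈ S', μ i • mompt (d+1) i) = ∑ i ∈ S', μ i • mompt d i := by
      funext k
      simp [projLast, Finset.sum_apply, mompt]
    rw [hpr]
    have hsd := Finset.sum_sdiff (f := fun i => μ i • mompt d i)
      (Finset.inter_subset_left (s₁ := S') (s₂ := S₀))
    have hdiffeq : S' \ (S' ∩ S₀) = S' \ S₀ := Finset.sdiff_inter_self_left S' S₀
    have hdiff0 : (∑ i ∈ S' \ S₀, μ i • mompt d i) = 0 := by
      apply Finset.sum_eq_zero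
      intro i hi
      rw [Finset.mem_sdiff] at hi
      rw [hzero i hi.1 hi.2, zero_smul]
    rw [hdiffeq, hdiff0, zero_add] at hsd
    rw [Finset.inter_comm]
    exact hsd
  have hwsum : (∑ i ∈ S₀, (if i ∈ S' then μ i else 0)) = 1 := by
    rw [Finset.sum_ite_mem]
    have hsd := Finset.sum_sdiff (f := μ) (Finset.inter_subset_left (s₁ := S') (s₂ := S₀))
    have hdiffeq : S' \ (S' ∩ S₀) = S' \ S₀ := Finset.sdiff_inter_self_left S' S₀
    have hdiff0 : (∑ i ∈ S' \ S₀, μ i) = 0 :=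
      Finset.sum_eq_zero fun i hi => hzero i (Finset.mem_sdiff.mp hi).1 (Finset.mem_sdiff.mp hi).2
    rw [hdiffeq, hdiff0, zero_add] at hsd
    rw [Finset.inter_comm, hsd, hμ1]
  -- uniqueness via Vandermonde
  set ν : ℕ → ℝ := fun i => (if i ∈ S' then μ i else 0) - μ₀ i with hν
  have hνsum : (∑ i ∈ S₀, ν i) = 0 := by
    rw [hν, Finset.sum_sub_distrib, hwsum, hμ₀sum, sub_self]
  have hνvec : ∀ k : Fin d, (∑ i ∈ S₀, ν i * (i:ℝ)^(k.1+1)) = 0 := by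
    intro k
    have h1 := congrFun hxrep k
    have h2 : (∑ i ∈ S₀, μ₀ i • mompt d i) k = x k := by rw [hx]
    simp only [Finset.sum_apply, Pi.smul_apply, smul_eq_mul, mompt] at h1 h2
    rw [hν]
    rw [Finset.sum_congr rfl (fun i (_ : i ∈ S₀) => by
      show ((if i ∈ S' then μ i else 0) - μ₀ i) * (i:ℝ)^(k.1+1)
        = (if i ∈ S' then μ i else 0) * (i:ℝ)^(k.1+1) - μ₀ i * (i:ℝ)^(k.1+1)
      ring)]
    rw [Finset.sum_sub_distrib, h1, h2, sub_self]
  have hνall : ∀ m : ℕ, m ≤ d → (∑ i ∈ S₀, ν i * (i:ℝ)^m) = 0 := by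
    intro m hm
    rcases Nat.eq_zero_or_pos m with h | h
    · subst h; simpa using hνsum
    · have hlt' : m - 1 < d := by omega
      have := hνvec ⟨m - 1, hlt'⟩
      simpa [Nat.sub_add_cancel h] using this
  have hreindex : ∀ g : ℕ → ℝ, (∑ i ∈ S₀, g i) = ∑ j : Fin (d+1), g (n - d + j.1) := by
    intro g
    rw [Fin.sum_univ_eq_sum_range (fun j => g (n - d + j)) (d+1)]
    have : S₀ = Finset.Ico (n - d) (n + 1) := by rw [hS₀, Finset.Ico_add_one_right_eq_Icc]
    rw [this, Finset.sum_Ico_eq_sum_range]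
    have hc : n + 1 - (n - d) = d + 1 := by omega
    rw [hc]
  have hinj : Function.Injective (fun j : Fin (d+1) => ((n - d + j.1 : ℕ) : ℝ)) := by
    intro a b hab
    have h1 : (n - d + a.1 : ℕ) = n - d + b.1 := Nat.cast_injective hab
    exact Fin.ext (by omega)
  have hu : (fun j : Fin (d+1) => ν (n - d + j.1)) = 0 := by
    apply Matrix.eq_zero_of_forall_pow_sum_mul_pow_eq_zero hinj
    intro m
    have := hνall m.1 (by omega)
    rw [hreindex (fun i => ν i * (i:ℝ)^m.1)] at this
    exact_mod_cast this
  have hν0 : ∀ i ∈ S₀, ν i = 0 := by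
    intro i hi
    rw [hS₀, Finset.mem_Icc] at hi
    have hj : i - (n - d) < d + 1 := by omega
    have h0 := congrFun hu ⟨i - (n - d), hj⟩
    simp only [Pi.zero_apply] at h0
    have heqi : n - d + (i - (n - d)) = i := by omega
    rwa [heqi] at h0
  have hS₀S' : S₀ ⊆ S' := by
    intro i hi
    by_contra h
    have h0 := hν0 i hi
    rw [hν] at h0
    simp only [if_neg h, zero_sub, neg_eq_zero] at h0
    have : ((d:ℝ) + 1)⁻¹ ≠ 0 := by positivity
    exact this h0
  have hfin : S₀ = S' :=
    Finset.eq_of_subset_of_card_le hS₀S' (by rw [hcard, T''.card_eq S' hS'mem])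
  rw [hfin]
  exact hS'mem

/-- let `S₀ = {n-d,…,n}` and `T <₂ T'`. If `d` is even and `S₀ ∈ T` then
`S₀ ∈ T'`; if `d` is odd and `S₀ ∈ T'` then `S₀ ∈ T`. -/
theorem stmt_12 (n d : ℕ) (hn : d + 1 < n) (T T' : Triangulation n d)
    (hle : le₂ T T') (hne : T.simps ≠ T'.simps) :
    (Even d → Finset.Icc (n - d) n ∈ T.simps → Finset.Icc (n - d) n ∈ T'.simps) ∧
    (Odd d → Finset.Icc (n - d) n ∈ T'.simps → Finset.Icc (n - d) n ∈ T.simps) := by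
  obtain ⟨w, c, hwlast, heq, hlt⟩ := facet n d hn
  constructor
  · intro hdeven hS₀T
    have hw1 : w (Fin.last d) = 1 := by rw [hwlast, Even.neg_one_pow hdeven]
    apply core n d hn T' w c heq hlt
    intro S' hS' z hz y hy hproj
    have h := hle _ hS₀T S' hS' y hy z hz hproj.symm
    rw [hw1]
    linarith
  · intro hdodd hS₀T'
    have hw1 : w (Fin.last d) = -1 := by rw [hwlast, Odd.neg_one_pow hdodd]
    apply core n d hn T w c heq hlt
    intro S hS z hz y hy hproj
    have h := hle S hS _ hS₀T' z hz y hy hproj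
    rw [hw1]
    linarith
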